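/- arXiv:math/0703849 — 4 statements merged into one kernel-verified Lean document; each statement's English description precedes it below -/
import Mathlib

section
/- Let θ ∈ ℝ, let c be a positive integer and d ∈ ℤ. On the space E of functions f : ℝ × (ℤ/cℤ) → ℂ such that for each α ∈ ℤ/cℤ the function x ↦ f(x,α) is a Schwartz function, define (fU)(x,α) = f(x − (cθ+d)/c, α − 1) and (fV)(x,α) = e^{2πi(x − d·α̃/c)}·f(x,α), where α̃ ∈ ℤ is any representative of α (the value is independent of the choice since e^{2πi d α̃/c} depends only on α̃ mod c). Then U and V map E into E, and for every f ∈ E one has (fU)V = e^{2πiθ}·(fV)U. -/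
open scoped Real

noncomputable section

/-- Membership in `E = 𝒮(ℝ × ℤ/cℤ)`: for each `α`, the slice `x ↦ f(x, α)` is a Schwartz
function. -/
def MemSchwartzModule {c : ℕ} (f : ℝ × ZMod c → ℂ) : Prop :=
  ∀ α : ZMod c, ∃ g : SchwartzMap ℝ ℂ, ∀ x : ℝ, f (x, α) = g x

/-- The right action of the generator `U`: `(fU)(x,α) = f(x − (cθ+d)/c, α − 1)`. -/
def actU (θ : ℝ) (c : ℕ) (d : ℤ) (f : ℝ × ZMod c → ℂ) : ℝ × ZMod c → ℂ :=
  fun p => f (p.1 - ((c : ℝ) * θ + (d : ℝ)) / (c : ℝ), p.2 - 1)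

/-- The right action of the generator `V`: `(fV)(x,α) = e^{2πi(x − d·α̃/c)}·f(x,α)`, where
`α̃ ∈ ℤ` is the canonical representative of `α` (the value does not depend on this choice). -/
def actV (c : ℕ) (d : ℤ) (f : ℝ × ZMod c → ℂ) : ℝ × ZMod c → ℂ :=
  fun p => Complex.exp (2 * π * Complex.I *
      ((p.1 : ℂ) - (d : ℂ) * ((p.2.val : ℤ) : ℂ) / (c : ℂ))) * f p

/-! `U` is a translation in `x` and `V` multiplies each slice by a smooth function of modulus one
with bounded derivatives, so both preserve Schwartz slices. For the commutation relation, `fUV`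
and `fVU` differ only in the phase: `e^{2πi(x − d·α̃/c)}` against
`e^{2πi(x − θ − d/c − d·(α−1)~/c)}`. Since `(α−1)~ + 1 ≡ α̃ (mod c)` and `e^{2πi d m/c}` depends on
`m` only modulo `c`, the quotient of the two phases is `e^{2πiθ}`. -/

open Complex

theorem iteratedDeriv_cexp_mul_ofReal (a : ℂ) (n : ℕ) :
    iteratedDeriv n (fun x : ℝ => cexp (a * x)) = fun x : ℝ => a ^ n * cexp (a * x) := by
  induction n with
  | zero => simp
  | succ n ih =>
    funext x
    have hexp : HasDerivAt (fun x : ℝ => cexp (a * x)) (cexp (a * x) * a) x := by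
      simpa using ((ofRealCLM.hasDerivAt (x := x)).const_mul a).cexp
    rw [iteratedDeriv_succ, ih, ((hexp.const_mul (a ^ n)).deriv)]
    ring

theorem hasTemperateGrowth_cexp_mul_ofReal {a : ℂ} (ha : a.re = 0) :
    Function.HasTemperateGrowth (fun x : ℝ => cexp (a * x)) := by
  refine ⟨((contDiff_exp (𝕜 := ℂ)).restrict_scalars ℝ).comp
    (contDiff_const.mul ofRealCLM.contDiff), fun n => ⟨0, ‖a‖ ^ n, fun x => ?_⟩⟩
  have hnorm : ‖cexp (a * x)‖ = 1 := by simp [norm_exp, ha]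
  simp [norm_iteratedFDeriv_eq_norm_iteratedDeriv, iteratedDeriv_cexp_mul_ofReal, hnorm]

theorem cexp_two_pi_I_mul_sub_div_eq_of_intCast_eq {c : ℕ} {m n : ℤ} (hmn : (m : ZMod c) = n)
    (x : ℂ) (d : ℤ) :
    cexp (2 * π * I * (x - d * m / c)) = cexp (2 * π * I * (x - d * n / c)) := by
  obtain ⟨k, hk⟩ := (ZMod.intCast_eq_intCast_iff_dvd_sub m n c).1 hmn
  rcases eq_or_ne c 0 with rfl | hc
  · simp -- both sides divide by `(0 : ℂ)`, so the `m`, `n` terms vanish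
  obtain rfl : m = n - c * k := by omega
  have hm : x - d * ((n - c * k : ℤ) : ℂ) / c = x - d * n / c + (d * k : ℤ) := by
    push_cast
    field_simp
    ring
  rw [hm, mul_add, exp_add, mul_comm _ ((d * k : ℤ) : ℂ), exp_int_mul_two_pi_mul_I, mul_one]

variable {θ : ℝ} {c : ℕ} {d : ℤ} {f : ℝ × ZMod c → ℂ}

theorem MemSchwartzModule.actU (hf : MemSchwartzModule f) :
    MemSchwartzModule (actU θ c d f) := by
  intro α
  obtain ⟨g, hg⟩ := hf (α - 1)
  exact ⟨g.compSubConstCLM ℝ _, fun x => hg _⟩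

theorem MemSchwartzModule.actV (hf : MemSchwartzModule f) :
    MemSchwartzModule (actV c d f) := by
  intro α
  obtain ⟨g, hg⟩ := hf α
  have hphase := hasTemperateGrowth_cexp_mul_ofReal (a := 2 * π * I) (by simp)
  refine ⟨cexp (-(2 * π * I * (d * (α.val : ℤ) / c))) •
    SchwartzMap.smulLeftCLM ℂ (fun x : ℝ => cexp (2 * π * I * x)) g, fun x => ?_⟩
  rw [smul_apply, SchwartzMap.smulLeftCLM_apply_apply hphase, ← hg, smul_eq_mul,
    smul_eq_mul, ← mul_assoc, ← exp_add, _root_.actV]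
  ring_nf

theorem actV_actU (hc : c ≠ 0) :
    actV c d (actU θ c d f) = fun p => cexp (2 * π * I * θ) * actU θ c d (actV c d f) p := by
  have : NeZero c := ⟨hc⟩
  funext ⟨x, α⟩
  have hrep : ((((α - 1).val + 1 : ℕ) : ℤ) : ZMod c) = ((α.val : ℤ) : ZMod c) := by
    push_cast
    simp
  simp only [actV, actU]
  rw [← cexp_two_pi_I_mul_sub_div_eq_of_intCast_eq hrep, ← mul_assoc, ← exp_add]
  congr 2
  push_cast
  field_simp
  ring

/-- `U` and `V` map `E` into `E`, and `(fU)V = e^{2πiθ}·(fV)U` for every `f ∈ E`. -/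
theorem statement8 (θ : ℝ) (c : ℕ) (hc : 0 < c) (d : ℤ) :
    (∀ f : ℝ × ZMod c → ℂ, MemSchwartzModule f →
      MemSchwartzModule (actU θ c d f) ∧ MemSchwartzModule (actV c d f)) ∧
    (∀ f : ℝ × ZMod c → ℂ, MemSchwartzModule f →
      actV c d (actU θ c d f)
        = fun p => Complex.exp (2 * π * Complex.I * θ) * actU θ c d (actV c d f) p) :=
  ⟨fun _ hf => ⟨hf.actU, hf.actV⟩, fun _ _ => actV_actU hc.ne'⟩

end
end

section
/- Let θ ∈ ℝ and g = [[a,b],[c,d]] ∈ SL₂(ℤ) with c > 0 and cθ + d ≠ 0, and set gθ = (aθ+b)/(cθ+d). On the space E of functions f : ℝ × (ℤ/cℤ) → ℂ that are Schwartz in the first variable, define the right-action operators (fU)(x,α) = f(x − (cθ+d)/c, α − 1), (fV)(x,α) = e^{2πi(x − d·α̃/c)} f(x,α), and the left-action operators (U'f)(x,α) = f(x − 1/c, α − a), (V'f)(x,α) = e^{2πi(x/(cθ+d) − α̃/c)} f(x,α), where α̃ ∈ ℤ represents α. Then: (i) U' and V' map E into E; (ii) U'V' = e^{2πi·gθ}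 V'U' as operators on E; and (iii) each of U', V' commutes with each of the right-action operators U, V, i.e. (U'f)U = U'(fU), (U'f)V = U'(fV), (V'f)U = V'(fU), (V'f)V = V'(fV) for all f ∈ E. -/
/-! `U'` translates each slice by `1/c` and `V'` multiplies it by a character of `ℝ`, a
multiplier of temperate growth, so both preserve Schwartz slices. Every relation between the
operators is an identity of phases `e^{2πi t}`: the representative of `α - n` differs from
`α̃ - n` by a multiple of `c`, after which the two exponents differ by an integer, and it is
`ad - bc = 1` that makes the constant terms integral (respectively equal to `gθ` for `U'V'`). -/

open scoped Real

noncomputable section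

/-- The left action of `U'`: `(U'f)(x,α) = f(x − 1/c, α − a)`. -/
def actU' (c : ℕ) (a : ℤ) (f : ℝ × ZMod c → ℂ) : ℝ × ZMod c → ℂ :=
  fun p => f (p.1 - 1 / (c : ℝ), p.2 - (a : ZMod c))

/-- The left action of `V'`: `(V'f)(x,α) = e^{2πi(x/(cθ+d) − α̃/c)}·f(x,α)`. -/
def actV' (θ : ℝ) (c : ℕ) (d : ℤ) (f : ℝ × ZMod c → ℂ) : ℝ × ZMod c → ℂ :=
  fun p => Complex.exp (2 * π * Complex.I *
      ((p.1 : ℂ) / ((c : ℂ) * θ + (d : ℂ)) - ((p.2.val : ℤ) : ℂ) / (c : ℂ))) * f p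

theorem Complex.hasTemperateGrowth_exp_ofReal_mul_I :
    Function.HasTemperateGrowth (fun x : ℝ => Complex.exp (x * Complex.I)) := by
  have hderiv : ∀ n : ℕ, iteratedDeriv n (fun x : ℝ => Complex.exp (x * Complex.I))
      = fun x : ℝ => Complex.I ^ n * Complex.exp (x * Complex.I) := by
    intro n
    induction n with
    | zero => simp
    | succ n ih =>
      rw [iteratedDeriv_succ, ih]
      funext x
      have := (((hasDerivAt_id x).ofReal_comp.mul_const Complex.I).cexp.const_mul
        (Complex.I ^ n)).deriv
      simp only [id, Complex.ofReal_one, one_mul] at this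
      rw [this, pow_succ]
      ring
  refine ⟨Complex.contDiff_exp.comp (Complex.ofRealCLM.contDiff.mul contDiff_const),
    fun n => ⟨0, 1, fun x => ?_⟩⟩
  rw [norm_iteratedFDeriv_eq_norm_iteratedDeriv, hderiv]
  simp [Complex.norm_exp_ofReal_mul_I]

theorem ZMod.intCast_val_sub_intCast {c : ℕ} [NeZero c] (α : ZMod c) (n : ℤ) :
    (((α - n).val : ℤ)) = ((α.val : ℤ) - n) % c := by
  rw [← ZMod.val_intCast]
  push_cast
  simp [ZMod.natCast_val, ZMod.cast_id]

theorem Complex.exp_two_pi_I_mul_eq_of_eq_add_int {z w : ℂ} (n : ℤ) (h : z = w + n) :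
    Complex.exp (2 * π * Complex.I * z) = Complex.exp (2 * π * Complex.I * w) := by
  rw [h, mul_add, Complex.exp_add, mul_comm _ (n : ℂ), Complex.exp_int_mul_two_pi_mul_I, mul_one]

namespace MemSchwartzModule

variable {c : ℕ} {f : ℝ × ZMod c → ℂ}

theorem comp_sub_const (hf : MemSchwartzModule f) (r : ℝ) (σ : ZMod c → ZMod c) :
    MemSchwartzModule (fun p => f (p.1 - r, σ p.2)) := by
  intro α
  obtain ⟨g, hg⟩ := hf (σ α)
  exact ⟨SchwartzMap.compSubConstCLM ℂ r g, fun x => hg (x - r)⟩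

theorem mul_left (hf : MemSchwartzModule f) {φ : ℝ × ZMod c → ℂ}
    (hφ : ∀ α, Function.HasTemperateGrowth (fun x => φ (x, α))) :
    MemSchwartzModule (fun p => φ p * f p) := by
  intro α
  obtain ⟨g, hg⟩ := hf α
  exact ⟨SchwartzMap.smulLeftCLM ℂ (fun x => φ (x, α)) g, fun x => by
    show φ (x, α) * f (x, α) = _
    rw [SchwartzMap.smulLeftCLM_apply_apply (hφ α), hg, smul_eq_mul]⟩

theorem actU' (hf : MemSchwartzModule f) (a : ℤ) : MemSchwartzModule (actU' c a f) :=
  hf.comp_sub_const (1 / c) (· - a)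

theorem actV' (hf : MemSchwartzModule f) (θ : ℝ) (d : ℤ) :
    MemSchwartzModule (actV' θ c d f) := by
  refine hf.mul_left fun α => ?_
  have hphase : (fun x : ℝ => Complex.exp (2 * π * Complex.I *
      ((x : ℂ) / ((c : ℂ) * θ + (d : ℂ)) - ((α.val : ℤ) : ℂ) / (c : ℂ))))
      = (fun x : ℝ => Complex.exp (x * Complex.I)) ∘
          fun x => 2 * π / ((c : ℝ) * θ + d) * x - 2 * π * α.val / c := by
    funext x
    simp only [Function.comp_apply]
    congr 1
    push_cast
    ring
  rw [hphase]
  exact Complex.hasTemperateGrowth_exp_ofReal_mul_I.comp (by fun_prop)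

end MemSchwartzModule

section Commutation

variable {θ : ℝ} {a b : ℤ} {c : ℕ} {d : ℤ}

theorem actU'_actV'_eq_exp_mul [NeZero c] (hdet : a * d - b * (c : ℤ) = 1)
    (hcd : (c : ℝ) * θ + (d : ℝ) ≠ 0) (f : ℝ × ZMod c → ℂ) :
    actU' c a (actV' θ c d f) = fun p => Complex.exp (2 * π * Complex.I *
      ((((a : ℝ) * θ + (b : ℝ)) / ((c : ℝ) * θ + (d : ℝ)) : ℝ) : ℂ)) *
        actV' θ c d (actU' c a f) p := by
  funext ⟨x, α⟩
  simp only [actU', actV']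
  rw [← mul_assoc, ← Complex.exp_add, ← mul_add]
  congr 1
  apply Complex.exp_two_pi_I_mul_eq_of_eq_add_int (((α.val : ℤ) - a) / c)
  have hz : (c : ℂ) * θ + d ≠ 0 := by exact_mod_cast hcd
  have hc : (c : ℂ) ≠ 0 := NeZero.ne _
  have hdetC : (a * d - b * c : ℂ) = 1 := by exact_mod_cast hdet
  rw [ZMod.intCast_val_sub_intCast, Int.emod_def]
  push_cast
  field_simp
  linear_combination hdetC

theorem actU_actU'_comm (f : ℝ × ZMod c → ℂ) :
    actU θ c d (actU' c a f) = actU' c a (actU θ c d f) := by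
  funext p
  simp only [actU, actU', sub_right_comm]

theorem actV_actU'_comm [NeZero c] (hdet : a * d - b * (c : ℤ) = 1) (f : ℝ × ZMod c → ℂ) :
    actV c d (actU' c a f) = actU' c a (actV c d f) := by
  funext ⟨x, α⟩
  simp only [actV, actU']
  congr 1
  apply Complex.exp_two_pi_I_mul_eq_of_eq_add_int (-b - d * (((α.val : ℤ) - a) / c))
  have hc : (c : ℂ) ≠ 0 := NeZero.ne _
  have hdetC : (a * d - b * c : ℂ) = 1 := by exact_mod_cast hdet
  rw [ZMod.intCast_val_sub_intCast, Int.emod_def]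
  push_cast
  field_simp
  linear_combination -hdetC

theorem actU_actV'_comm [NeZero c] (hcd : (c : ℝ) * θ + (d : ℝ) ≠ 0) (f : ℝ × ZMod c → ℂ) :
    actU θ c d (actV' θ c d f) = actV' θ c d (actU θ c d f) := by
  funext ⟨x, α⟩
  simp only [actU, actV']
  congr 1
  apply Complex.exp_two_pi_I_mul_eq_of_eq_add_int (((α.val : ℤ) - 1) / c)
  have hz : (c : ℂ) * θ + d ≠ 0 := by exact_mod_cast hcd
  have hc : (c : ℂ) ≠ 0 := NeZero.ne _
  rw [← Int.cast_one (R := ZMod c), ZMod.intCast_val_sub_intCast, Int.emod_def]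
  push_cast
  field_simp
  ring

theorem actV_actV'_comm (f : ℝ × ZMod c → ℂ) :
    actV c d (actV' θ c d f) = actV' θ c d (actV c d f) := by
  funext p
  simp only [actV, actV']
  ring

end Commutation

/-- For `g = [[a,b],[c,d]] ∈ SL₂(ℤ)` with `c > 0` and `cθ + d ≠ 0`:
(i) `U'` and `V'` map `E` into `E`;
(ii) `U'V' = e^{2πi·gθ} V'U'` on `E`, where `gθ = (aθ+b)/(cθ+d)`;
(iii) each of `U', V'` commutes with each of the right-action operators `U, V` on `E`. -/
theorem statement9 (θ : ℝ) (a b : ℤ) (c : ℕ) (d : ℤ)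
    (hdet : a * d - b * (c : ℤ) = 1) (hc : 0 < c) (hcd : (c : ℝ) * θ + (d : ℝ) ≠ 0) :
    (∀ f : ℝ × ZMod c → ℂ, MemSchwartzModule f →
      MemSchwartzModule (actU' c a f) ∧ MemSchwartzModule (actV' θ c d f)) ∧
    (∀ f : ℝ × ZMod c → ℂ, MemSchwartzModule f →
      actU' c a (actV' θ c d f)
        = fun p => Complex.exp (2 * π * Complex.I *
            ((((a : ℝ) * θ + (b : ℝ)) / ((c : ℝ) * θ + (d : ℝ)) : ℝ) : ℂ)) *
          actV' θ c d (actU' c a f) p) ∧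
    (∀ f : ℝ × ZMod c → ℂ, MemSchwartzModule f →
      actU θ c d (actU' c a f) = actU' c a (actU θ c d f) ∧
      actV c d (actU' c a f) = actU' c a (actV c d f) ∧
      actU θ c d (actV' θ c d f) = actV' θ c d (actU θ c d f) ∧
      actV c d (actV' θ c d f) = actV' θ c d (actV c d f)) := by
  have : NeZero c := ⟨hc.ne'⟩
  exact ⟨fun f hf => ⟨hf.actU' a, hf.actV' θ d⟩,
    fun f _ => actU'_actV'_eq_exp_mul hdet hcd f,
    fun f _ => ⟨actU_actU'_comm f, actV_actU'_comm hdet f, actU_actV'_comm hcd f,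
      actV_actV'_comm f⟩⟩
end
end

section
/- Let A be a unital complex *-algebra and let e ∈ M₂(A) satisfy e² = e, e* = e (conjugate-transpose star), and e₁₁ + e₂₂ = 1. Set x = e₁₂ + e₂₁, y = i(e₁₂ − e₂₁), z = e₁₁ − e₂₂. Then x, y, z are self-adjoint, pairwise commuting elements of A satisfying x² + y² + z² = 1, and e = (1/2)·[[1+z, x−iy],[x+iy, 1−z]]. -/
/-- Let `A` be a unital complex *-algebra and `e ∈ M₂(A)` with `e² = e`, `e* = e`
(conjugate-transpose star) and `e₁₁ + e₂₂ = 1`. With `x = e₁₂ + e₂₁`, `y = i(e₁₂ − e₂₁)`,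
`z = e₁₁ − e₂₂`, the elements `x, y, z` are self-adjoint, pairwise commuting, satisfy
`x² + y² + z² = 1`, and `e = ½·[[1+z, x−iy],[x+iy, 1−z]]`. -/
theorem statement13 {A : Type*} [Ring A] [Algebra ℂ A] [StarRing A] [StarModule ℂ A]
    (e : Matrix (Fin 2) (Fin 2) A)
    (hidem : e * e = e) (hsa : star e = e) (htr : e 0 0 + e 1 1 = 1) :
    let x : A := e 0 1 + e 1 0
    let y : A := Complex.I • (e 0 1 - e 1 0)
    let z : A := e 0 0 - e 1 1
    star x = x ∧ star y = y ∧ star z = z ∧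
    x * y = y * x ∧ x * z = z * x ∧ y * z = z * y ∧
    x ^ 2 + y ^ 2 + z ^ 2 = 1 ∧
    e = (2 : ℂ)⁻¹ • !![1 + z, x - Complex.I • y; x + Complex.I • y, 1 - z] := by
  intro x y z
  -- entry equations from idempotency
  have h00 : e 0 0 * e 0 0 + e 0 1 * e 1 0 = e 0 0 := by
    have := congrFun (congrFun hidem 0) 0
    simpa [Matrix.mul_apply, Fin.sum_univ_two] using this
  have h01 : e 0 0 * e 0 1 + e 0 1 * e 1 1 = e 0 1 := by
    have := congrFun (congrFun hidem 0) 1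
    simpa [Matrix.mul_apply, Fin.sum_univ_two] using this
  have h10 : e 1 0 * e 0 0 + e 1 1 * e 1 0 = e 1 0 := by
    have := congrFun (congrFun hidem 1) 0
    simpa [Matrix.mul_apply, Fin.sum_univ_two] using this
  have h11 : e 1 0 * e 0 1 + e 1 1 * e 1 1 = e 1 1 := by
    have := congrFun (congrFun hidem 1) 1
    simpa [Matrix.mul_apply, Fin.sum_univ_two] using this
  -- star relations
  have s00 : star (e 0 0) = e 0 0 := by
    have := congrFun (congrFun hsa 0) 0
    simpa [Matrix.star_apply] using this
  have s11 : star (e 1 1) = e 1 1 := by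
    have := congrFun (congrFun hsa 1) 1
    simpa [Matrix.star_apply] using this
  have s10 : star (e 1 0) = e 0 1 := by
    have := congrFun (congrFun hsa 0) 1
    simpa [Matrix.star_apply] using this
  have s01 : star (e 0 1) = e 1 0 := by
    have := congrFun (congrFun hsa 1) 0
    simpa [Matrix.star_apply] using this
  have hd : e 1 1 = 1 - e 0 0 := eq_sub_of_add_eq' htr
  -- commutations among entries
  have hab : e 0 0 * e 0 1 = e 0 1 * e 0 0 := by
    have h01' : e 0 0 * e 0 1 + (e 0 1 - e 0 1 * e 0 0) = e 0 1 := by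
      rw [← mul_one_sub, ← hd]; exact h01
    have := eq_sub_of_add_eq h01'
    rwa [sub_sub_cancel] at this
  have hac : e 0 0 * e 1 0 = e 1 0 * e 0 0 := by
    have h10' : e 1 0 * e 0 0 + (e 1 0 - e 0 0 * e 1 0) = e 1 0 := by
      rw [← one_sub_mul, ← hd]; exact h10
    have := eq_sub_of_add_eq h10'
    rw [sub_sub_cancel] at this
    exact this.symm
  have hbc' : e 0 1 * e 1 0 = e 0 0 - e 0 0 * e 0 0 := eq_sub_of_add_eq' h00
  have hcb : e 1 0 * e 0 1 = e 0 1 * e 1 0 := by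
    have h2 : e 1 0 * e 0 1 = e 1 1 - e 1 1 * e 1 1 := eq_sub_of_add_eq h11
    rw [h2, hbc', hd]; noncomm_ring
  -- square of y
  have hy2 : y ^ 2 = -((e 0 1 - e 1 0) * (e 0 1 - e 1 0)) := by
    show (Complex.I • (e 0 1 - e 1 0)) ^ 2 = _
    rw [sq, smul_mul_smul_comm, Complex.I_mul_I, neg_one_smul]
  refine ⟨?_, ?_, ?_, ?_, ?_, ?_, ?_, ?_⟩
  · show star (e 0 1 + e 1 0) = e 0 1 + e 1 0
    rw [star_add, s01, s10, add_comm]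
  · show star (Complex.I • (e 0 1 - e 1 0)) = Complex.I • (e 0 1 - e 1 0)
    rw [star_smul, star_sub, s01, s10, Complex.star_def, Complex.conj_I, neg_smul,
      smul_sub, smul_sub]
    abel
  · show star (e 0 0 - e 1 1) = e 0 0 - e 1 1
    rw [star_sub, s00, s11]
  · show (e 0 1 + e 1 0) * (Complex.I • (e 0 1 - e 1 0))
      = (Complex.I • (e 0 1 - e 1 0)) * (e 0 1 + e 1 0)
    rw [mul_smul_comm, smul_mul_assoc]
    congr 1
    have : (e 0 1 + e 1 0) * (e 0 1 - e 1 0) - (e 0 1 - e 1 0) * (e 0 1 + e 1 0)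
        = 2 * (e 1 0 * e 0 1 - e 0 1 * e 1 0) := by noncomm_ring
    have h0 : (e 0 1 + e 1 0) * (e 0 1 - e 1 0) - (e 0 1 - e 1 0) * (e 0 1 + e 1 0) = 0 := by
      rw [this, hcb]; noncomm_ring
    linear_combination (norm := noncomm_ring) h0
  · show (e 0 1 + e 1 0) * (e 0 0 - e 1 1) = (e 0 0 - e 1 1) * (e 0 1 + e 1 0)
    rw [hd]
    have h0 : (e 0 1 + e 1 0) * (e 0 0 - (1 - e 0 0)) - (e 0 0 - (1 - e 0 0)) * (e 0 1 + e 1 0)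
        = 2 * ((e 0 1 * e 0 0 - e 0 0 * e 0 1) + (e 1 0 * e 0 0 - e 0 0 * e 1 0)) := by
      noncomm_ring
    have h1 : (e 0 1 + e 1 0) * (e 0 0 - (1 - e 0 0)) - (e 0 0 - (1 - e 0 0)) * (e 0 1 + e 1 0)
        = 0 := by rw [h0, hab, hac]; noncomm_ring
    linear_combination (norm := noncomm_ring) h1
  · show (Complex.I • (e 0 1 - e 1 0)) * (e 0 0 - e 1 1)
      = (e 0 0 - e 1 1) * (Complex.I • (e 0 1 - e 1 0))
    rw [smul_mul_assoc, mul_smul_comm]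
    congr 1
    rw [hd]
    have h0 : (e 0 1 - e 1 0) * (e 0 0 - (1 - e 0 0)) - (e 0 0 - (1 - e 0 0)) * (e 0 1 - e 1 0)
        = 2 * ((e 0 1 * e 0 0 - e 0 0 * e 0 1) - (e 1 0 * e 0 0 - e 0 0 * e 1 0)) := by
      noncomm_ring
    have h1 : (e 0 1 - e 1 0) * (e 0 0 - (1 - e 0 0)) - (e 0 0 - (1 - e 0 0)) * (e 0 1 - e 1 0)
        = 0 := by rw [h0, hab, hac]; noncomm_ring
    linear_combination (norm := noncomm_ring) h1
  · show (e 0 1 + e 1 0) ^ 2 + y ^ 2 + (e 0 0 - e 1 1) ^ 2 = 1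
    rw [hy2, hd]
    have h1 : (e 0 1 + e 1 0) ^ 2 + -((e 0 1 - e 1 0) * (e 0 1 - e 1 0))
        + (e 0 0 - (1 - e 0 0)) ^ 2
        = 2 * (e 0 1 * e 1 0) + 2 * (e 1 0 * e 0 1)
          + (e 0 0 - (1 - e 0 0)) * (e 0 0 - (1 - e 0 0)) := by noncomm_ring
    rw [h1, hcb, hbc']
    noncomm_ring
  · have hd' : e 0 0 = 1 - e 1 1 := eq_sub_of_add_eq htr
    ext i j
    fin_cases i <;> fin_cases j <;>
      simp only [Matrix.smul_apply, Matrix.cons_val', Matrix.cons_val_zero, Matrix.cons_val_one,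
        Matrix.head_cons, Matrix.head_fin_const, Matrix.empty_val', Matrix.cons_val_fin_one,
        Fin.isValue, Matrix.of_apply]
    · show e 0 0 = (2:ℂ)⁻¹ • (1 + (e 0 0 - e 1 1))
      rw [hd, show (1:A) + (e 0 0 - (1 - e 0 0)) = (2:ℂ) • e 0 0 by rw [two_smul]; abel,
        smul_smul]
      norm_num
    · show e 0 1 = (2:ℂ)⁻¹ • ((e 0 1 + e 1 0) - Complex.I • (Complex.I • (e 0 1 - e 1 0)))
      rw [smul_smul, Complex.I_mul_I, neg_one_smul, sub_neg_eq_add,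
        show (e 0 1 + e 1 0) + (e 0 1 - e 1 0) = (2:ℂ) • e 0 1 by rw [two_smul]; abel,
        smul_smul]
      norm_num
    · show e 1 0 = (2:ℂ)⁻¹ • ((e 0 1 + e 1 0) + Complex.I • (Complex.I • (e 0 1 - e 1 0)))
      rw [smul_smul, Complex.I_mul_I, neg_one_smul,
        show (e 0 1 + e 1 0) + -(e 0 1 - e 1 0) = (2:ℂ) • e 1 0 by rw [two_smul]; abel,
        smul_smul]
      norm_num
    · show e 1 1 = (2:ℂ)⁻¹ • (1 - (e 0 0 - e 1 1))
      rw [hd', show (1:A) - ((1 - e 1 1) - e 1 1) = (2:ℂ) • e 1 1 by rw [two_smul]; abel,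
        smul_smul]
      norm_num
end

section
/- The algebra C(𝕋²) of continuous complex-valued functions on the torus 𝕋² = (ℝ/ℤ) × (ℝ/ℤ) is the universal C*-algebra generated by two commuting unitaries: for every unital C*-algebra B and every pair of unitaries u, v ∈ B with uv = vu, there exists a unique continuous unital star-algebra homomorphism φ : C(𝕋², ℂ) → B such that φ(e₁) = u and φ(e₂) = v, where e₁(s,t) = e^{2πis} and e₂(s,t) = e^{2πit} are the coordinate unitaries of C(𝕋², ℂ). -/
open AddCircle

noncomputable section

instance : Fact ((0:ℝ) < 1) := ⟨one_pos⟩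

/-- The torus `𝕋² = (ℝ/ℤ) × (ℝ/ℤ)`. -/
abbrev Torus2 : Type := AddCircle (1:ℝ) × AddCircle (1:ℝ)

/-- The first coordinate unitary `e₁(s,t) = e^{2πis}` of `C(𝕋², ℂ)`. -/
def coordU1 : C(Torus2, ℂ) :=
  ⟨fun p => (toCircle p.1 : ℂ), by
    exact continuous_subtype_val.comp (continuous_toCircle.comp continuous_fst)⟩

/-- The second coordinate unitary `e₂(s,t) = e^{2πit}` of `C(𝕋², ℂ)`. -/
def coordU2 : C(Torus2, ℂ) :=
  ⟨fun p => (toCircle p.2 : ℂ), by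
    exact continuous_subtype_val.comp (continuous_toCircle.comp continuous_snd)⟩

/-! The closed star subalgebra generated by two commuting unitaries `u, v` is commutative
(by Fuglede, `v*` commutes with `u`), hence by Gelfand duality it is `C(X, ℂ)` for its character
space `X`. Characters send unitaries to the unit circle, so `χ ↦ (χ u, χ v)` maps `X` into the
torus, and composing with this map sends `e₁, e₂` to `u, v`. Uniqueness: `e₁, e₂` separate the
points of the torus, so by Stone–Weierstrass they generate a dense star subalgebra. -/

open WeakDual
open scoped CStarAlgebra

lemma coordU1_apply (p : Torus2) : coordU1 p = toCircle p.1 := rfl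

lemma coordU2_apply (p : Torus2) : coordU2 p = toCircle p.2 := rfl

lemma separatesPoints_adjoin_coordU :
    (StarAlgebra.adjoin ℂ ({coordU1, coordU2} : Set C(Torus2, ℂ))).SeparatesPoints := by
  intro p q hpq
  have mem {f} (hf : f ∈ ({coordU1, coordU2} : Set C(Torus2, ℂ))) :
      f ∈ StarAlgebra.adjoin ℂ ({coordU1, coordU2} : Set C(Torus2, ℂ)) :=
    StarAlgebra.subset_adjoin ℂ _ hf
  have toCircle_ne {x y : AddCircle (1 : ℝ)} (h : x ≠ y) : (toCircle x : ℂ) ≠ toCircle y :=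
    Circle.coe_injective.ne ((injective_toCircle one_ne_zero).ne h)
  rcases not_and_or.mp (Prod.ext_iff.not.mp hpq) with h | h
  · exact ⟨coordU1, ⟨coordU1, mem (by simp), rfl⟩, toCircle_ne h⟩
  · exact ⟨coordU2, ⟨coordU2, mem (by simp), rfl⟩, toCircle_ne h⟩

theorem torus_starAlgHom_ext {A : Type*} [Ring A] [StarRing A] [Algebra ℂ A] [TopologicalSpace A]
    [T2Space A] {φ ψ : C(Torus2, ℂ) →⋆ₐ[ℂ] A} (hφ : Continuous φ) (hψ : Continuous ψ)
    (h₁ : φ coordU1 = ψ coordU1) (h₂ : φ coordU2 = ψ coordU2) : φ = ψ := by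
  suffices (⊤ : StarSubalgebra ℂ C(Torus2, ℂ)) ≤ StarAlgHom.equalizer φ ψ from
    StarAlgHom.ext fun f => this StarSubalgebra.mem_top
  rw [← ContinuousMap.starSubalgebra_topologicalClosure_eq_top_of_separatesPoints _
    separatesPoints_adjoin_coordU]
  refine StarSubalgebra.topologicalClosure_minimal
    (StarAlgHom.adjoin_le_equalizer φ ψ ?_) (isClosed_eq hφ hψ)
  rintro f (rfl | rfl)
  exacts [h₁, h₂]

namespace WeakDual.CharacterSpace

variable {A : Type*} [CStarAlgebra A]

lemma norm_apply_of_mem_unitary (χ : characterSpace ℂ A) {w : A} (hw : w ∈ unitary A) :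
    ‖χ w‖ = 1 :=
  spectrum.norm_eq_one_of_unitary hw (apply_mem_spectrum χ w)

def evalCircle (w : unitary A) : C(characterSpace ℂ A, Circle) :=
  ⟨fun χ => ⟨χ w, mem_sphere_zero_iff_norm.mpr (norm_apply_of_mem_unitary χ w.2)⟩,
    ((eval_continuous (w : A)).comp continuous_subtype_val).subtype_mk _⟩

def toTorus (u v : unitary A) : C(characterSpace ℂ A, Torus2) :=
  let angle : C(Circle, AddCircle (1 : ℝ)) := (homeomorphCircle one_ne_zero).symm
  .prodMk (angle.comp (evalCircle u)) (angle.comp (evalCircle v))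

lemma coordU1_comp_toTorus (u v : unitary A) :
    coordU1.comp (toTorus u v) = gelfandTransform ℂ A u := by
  ext χ
  simp [coordU1_apply, toTorus, ← homeomorphCircle_apply one_ne_zero]
  rfl

lemma coordU2_comp_toTorus (u v : unitary A) :
    coordU2.comp (toTorus u v) = gelfandTransform ℂ A v := by
  ext χ
  simp [coordU2_apply, toTorus, ← homeomorphCircle_apply one_ne_zero]
  rfl

end WeakDual.CharacterSpace

section Commutative

open CharacterSpace

variable {A : Type*} [CommCStarAlgebra A]

def torusStarAlgHom (u v : unitary A) : C(Torus2, ℂ) →⋆ₐ[ℂ] A :=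
  ((gelfandStarTransform A).symm : C(characterSpace ℂ A, ℂ) →⋆ₐ[ℂ] A).comp
    (ContinuousMap.compStarAlgHom' ℂ ℂ (toTorus u v))

lemma torusStarAlgHom_coordU1 (u v : unitary A) : torusStarAlgHom u v coordU1 = u :=
  (gelfandStarTransform A).symm_apply_eq.mpr (coordU1_comp_toTorus u v)

lemma torusStarAlgHom_coordU2 (u v : unitary A) : torusStarAlgHom u v coordU2 = v :=
  (gelfandStarTransform A).symm_apply_eq.mpr (coordU2_comp_toTorus u v)

end Commutative

open scoped IsMulCommutative in
theorem exists_torus_starAlgHom_of_commute {B : Type*} [CStarAlgebra B] {u v : B}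
    (hu : u ∈ unitary B) (hv : v ∈ unitary B) (huv : Commute u v) :
    ∃ φ : C(Torus2, ℂ) →⋆ₐ[ℂ] B, φ coordU1 = u ∧ φ coordU2 = v := by
  have hcomm : ∀ a ∈ ({u, v} : Set B), ∀ b ∈ ({u, v} : Set B), Commute a b := by
    rintro a (rfl | rfl) b (rfl | rfl) <;> simp [huv, huv.symm]
  have hnormal : ∀ b ∈ ({u, v} : Set B), IsStarNormal b := by
    rintro b (rfl | rfl)
    exacts [isStarNormal_of_mem_unitary hu, isStarNormal_of_mem_unitary hv]
  let S₀ := StarAlgebra.adjoin ℂ ({u, v} : Set B)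
  have : IsMulCommutative S₀ := StarAlgebra.isMulCommutative_adjoin ℂ
    (fun a ha b hb => (hcomm a ha b hb).eq)
    (fun a ha b hb => ((hnormal b hb).commute_star_right (hcomm a ha b hb)).eq)
  let S := S₀.topologicalClosure
  have : IsClosed (S : Set B) := S₀.isClosed_topologicalClosure
  let _ : CommRing S := S₀.commRingTopologicalClosure mul_comm
  let _ : CommCStarAlgebra S := {}
  have mem {w} (hw : w ∈ ({u, v} : Set B)) : w ∈ S :=
    S₀.le_topologicalClosure (StarAlgebra.subset_adjoin ℂ _ hw)
  let u' : unitary S := ⟨⟨u, mem (by simp)⟩, Subtype.ext hu.1, Subtype.ext hu.2⟩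
  let v' : unitary S := ⟨⟨v, mem (by simp)⟩, Subtype.ext hv.1, Subtype.ext hv.2⟩
  exact ⟨S.subtype.comp (torusStarAlgHom u' v'),
    congr_arg Subtype.val (torusStarAlgHom_coordU1 u' v'),
    congr_arg Subtype.val (torusStarAlgHom_coordU2 u' v')⟩

/-- `C(𝕋²)` is the universal C*-algebra generated by two commuting unitaries: for every
unital C*-algebra `B` and unitaries `u, v ∈ B` with `uv = vu`, there is a unique continuous
unital star-algebra homomorphism `φ : C(𝕋², ℂ) → B` with `φ(e₁) = u` and `φ(e₂) = v`. -/
theorem statement16 {B : Type*} [NormedRing B] [StarRing B] [CStarRing B]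
    [NormedAlgebra ℂ B] [CompleteSpace B] [StarModule ℂ B]
    (u v : B) (hu : u ∈ unitary B) (hv : v ∈ unitary B) (huv : u * v = v * u) :
    ∃! φ : C(Torus2, ℂ) →⋆ₐ[ℂ] B,
      Continuous φ ∧ φ coordU1 = u ∧ φ coordU2 = v := by
  let _ : CStarAlgebra B := {}
  obtain ⟨φ, hφ₁, hφ₂⟩ := exists_torus_starAlgHom_of_commute hu hv huv
  refine ⟨φ, ⟨map_continuous φ, hφ₁, hφ₂⟩, fun ψ ⟨hψ, hψ₁, hψ₂⟩ => ?_⟩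
  exact torus_starAlgHom_ext hψ (map_continuous φ) (hψ₁.trans hφ₁.symm) (hψ₂.trans hφ₂.symm)
end
end
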